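/- arXiv:2301.02266 — 7 statements merged into one kernel-verified Lean document; each statement's English description precedes it below -/
import Mathlib

section
/- In any positive implication algebra, distributivity holds: a → (b → c) = (a → b) → (a → c). -/
/-- In any positive implication algebra, distributivity holds:
a → (b → c) = (a → b) → (a → c). -/
theorem stmt_10 {A : Type*} (f : A → A → A) (one : A)
    (p1 : ∀ a b, f a (f b a) = one)
    (p2 : ∀ a b c, f (f a (f b c)) (f (f a b) (f a c)) = one)
    (p3 : ∀ a b, f a b = one → f b a = one → a = b)
    (p4 : ∀ a, f a one = one) :
    ∀ a b c, f a (f b c) = f (f a b) (f a c) := by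
  -- modus ponens at top
  have mp : ∀ x, f one x = one → x = one := fun x h => p3 x one (p4 x) h
  have refl : ∀ x, f x x = one := by
    intro x
    have h := p2 x one x
    rw [p1 x one] at h
    have h2 := mp _ h
    rw [p4 x] at h2
    exact mp _ h2
  have one_f : ∀ x, f one x = x := by
    intro x
    have h := p2 (f one x) one x
    rw [refl (f one x)] at h
    have h2 := mp _ h
    rw [p4 (f one x)] at h2
    have h3 := mp _ h2
    exact p3 _ _ h3 (p1 x one)
  have trans : ∀ x y z, f x y = one → f y z = one → f x z = one := by
    intro x y z hxy hyz
    have h := p2 x y z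
    rw [hyz, p4 x, hxy] at h
    have h2 := mp _ h
    rw [one_f] at h2
    exact h2
  -- antitone in first argument: if x ≤ y then y→z ≤ x→z
  have anti : ∀ x y z, f x y = one → f (f y z) (f x z) = one := by
    intro x y z hxy
    have h1 : f (f y z) (f x (f y z)) = one := p1 (f y z) x
    have h2 : f (f x (f y z)) (f (f x y) (f x z)) = one := p2 x y z
    have h3 : f (f y z) (f (f x y) (f x z)) = one := trans _ _ _ h1 h2
    rw [hxy, one_f] at h3
    exact h3
  -- exchange: a→(b→c) = b→(a→c)
  have exch_le : ∀ x y z, f (f x (f y z)) (f y (f x z)) = one := by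
    intro x y z
    have h1 := p2 x y z
    have h2 : f (f (f x y) (f x z)) (f y (f x z)) = one :=
      anti y (f x y) (f x z) (p1 y x)
    exact trans _ _ _ h1 h2
  have exch : ∀ x y z, f x (f y z) = f y (f x z) := fun x y z =>
    p3 _ _ (exch_le x y z) (exch_le y x z)
  intro a b c
  apply p3 _ _ (p2 a b c)
  -- (a→b)→(a→c) ≤ b→(a→c) = a→(b→c)
  have h := anti b (f a b) (f a c) (p1 b a)
  rw [← exch a b c] at h
  exact h
end

section
/- Any positive implication algebra satisfying the contraction identity (a → b) → a = a for all a, b is an implication algebra; in particular quasi-commutativity (a → b) → b = (b → a) → a holds. -/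
/-- Any positive implication algebra satisfying the contraction identity
(a → b) → a = a is an implication algebra; in particular quasi-commutativity
(a → b) → b = (b → a) → a holds (and exchange). -/
theorem stmt_12 {A : Type*} (f : A → A → A) (one : A)
    (p1 : ∀ a b, f a (f b a) = one)
    (p2 : ∀ a b c, f (f a (f b c)) (f (f a b) (f a c)) = one)
    (p3 : ∀ a b, f a b = one → f b a = one → a = b)
    (p4 : ∀ a, f a one = one)
    (contraction : ∀ a b, f (f a b) a = a) :
    (∀ a b, f (f a b) b = f (f b a) a) ∧
    (∀ a b c, f a (f b c) = f b (f a c)) := by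
  have oneI : ∀ x, f one x = one → x = one := fun x h => (p3 one x h (p4 x)).symm
  have refl' : ∀ a, f a a = one := by
    intro a
    have h := p2 a (f a a) a
    rw [p1, p1] at h
    exact oneI _ (oneI _ h)
  have mp : ∀ a b c, f a b = one → f b c = one → f a c = one := by
    intro a b c h1 h2
    have h := p2 a b c
    rw [h2, p4, h1] at h
    exact oneI _ (oneI _ h)
  have lone : ∀ a, f one a = a := by
    intro a
    have h2 : f (f one a) a = one := by
      have h := p2 (f one a) one a
      rw [refl', p4] at h
      exact oneI _ (oneI _ h)
    exact p3 _ _ h2 (p1 a one)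
  have anti : ∀ x y z, f x y = one → f (f y z) (f x z) = one := by
    intro x y z h
    have h2 := p2 x y z
    rw [h, lone] at h2
    exact mp _ _ _ (p1 (f y z) x) h2
  have mono : ∀ x y z, f y z = one → f (f x y) (f x z) = one := by
    intro x y z h
    have h2 := p2 x y z
    rw [h, p4, lone] at h2
    exact h2
  have exch_le : ∀ a b c, f (f a (f b c)) (f b (f a c)) = one := by
    intro a b c
    exact mp _ _ _ (p2 a b c) (anti b (f a b) (f a c) (p1 b a))
  have exch : ∀ a b c, f a (f b c) = f b (f a c) :=
    fun a b c => p3 _ _ (exch_le a b c) (exch_le b a c)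
  have qc_le : ∀ a b, f (f (f a b) b) (f (f b a) a) = one := by
    intro a b
    have hbv : f b (f (f b a) a) = one := (exch b (f b a) a).trans (refl' _)
    have step1 : f (f (f a b) b) (f (f a b) (f (f b a) a)) = one :=
      mono (f a b) b (f (f b a) a) hbv
    have havb : f (f (f (f b a) a) b) (f a b) = one :=
      anti a (f (f b a) a) b (p1 a (f b a))
    have step2 : f (f (f a b) (f (f b a) a)) (f (f (f (f b a) a) b) (f (f b a) a)) = one :=
      anti (f (f (f b a) a) b) (f a b) (f (f b a) a) havb
    rw [contraction] at step2
    exact mp _ _ _ step1 step2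
  exact ⟨fun a b => p3 _ _ (qc_le a b) (qc_le b a), exch⟩
end

section
/- In an implication algebra, a proper implicative filter is prime if and only if it is irreducible. -/
def IsImpFilter {A : Type*} (f : A → A → A) (F : Set A) : Prop :=
  (∀ a, f a a ∈ F) ∧ ∀ a b, a ∈ F → f a b ∈ F → b ∈ F

def IsProperFilter {A : Type*} (f : A → A → A) (F : Set A) : Prop :=
  IsImpFilter f F ∧ F ≠ Set.univ

def IsPrimeFilter {A : Type*} (f : A → A → A) (F : Set A) : Prop :=
  IsProperFilter f F ∧ ∀ a b, f (f a b) b ∈ F → a ∈ F ∨ b ∈ F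

def IsIrreducibleFilter {A : Type*} (f : A → A → A) (F : Set A) : Prop :=
  IsProperFilter f F ∧ ∀ F₁ F₂ : Set A, IsProperFilter f F₁ →
    IsProperFilter f F₂ → F = F₁ ∩ F₂ → F = F₁ ∨ F = F₂

section ImpAlg

variable {A : Type*} (f : A → A → A)

theorem impD1 (C : ∀ a b, f (f a b) a = a) (a b : A) :
    f a (f a b) = f a b := by
  have h2 : f (f (f a b) a) (f a b) = f a b := C (f a b) a
  rwa [C a b] at h2

theorem impStar (C : ∀ a b, f (f a b) a = a)
    (Q : ∀ a b, f (f a b) b = f (f b a) a)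
    (E : ∀ a b c, f a (f b c) = f b (f a c)) (a b : A) :
    f (f (f a a) b) b = f a a := by
  calc f (f (f a a) b) b = f (f b (f a a)) (f a a) := Q _ _
    _ = f (f a (f b a)) (f a a) := by rw [E b a a]
    _ = f a (f (f a (f b a)) a) := (E a (f a (f b a)) a).symm
    _ = f a a := by rw [C a (f b a)]

theorem impOne (C : ∀ a b, f (f a b) a = a)
    (Q : ∀ a b, f (f a b) b = f (f b a) a)
    (E : ∀ a b c, f a (f b c) = f b (f a c)) (a b : A) :
    f a a = f b b := by
  set k := f (f a a) (f b b) with hk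
  have hkb : f k b = b := by
    have h : k = f b (f (f a a) b) := E (f a a) b b
    rw [h]; exact C b (f (f a a) b)
  have hbk : f b k = k := by
    calc f b k = f (f a a) (f b (f b b)) := E b (f a a) (f b b)
      _ = f (f a a) (f b b) := by rw [impD1 f C b b]
  have hkk : f k k = f b b := by
    have h := Q b k
    rwa [hbk, hkb] at h
  calc f a a = f (f (f a a) (f b b)) (f b b) := (impStar f C Q E a (f b b)).symm
    _ = f k (f b b) := rfl
    _ = f k (f k k) := by rw [hkk]
    _ = f k k := impD1 f C k k
    _ = f b b := hkk

theorem impRightOne (C : ∀ a b, f (f a b) a = a)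
    (Q : ∀ a b, f (f a b) b = f (f b a) a)
    (E : ∀ a b c, f a (f b c) = f b (f a c)) (a b : A) :
    f a (f b b) = f b b := by
  calc f a (f b b) = f a (f a a) := by rw [impOne f C Q E b a]
    _ = f a a := impD1 f C a a
    _ = f b b := impOne f C Q E a b

theorem impAntisym (C : ∀ a b, f (f a b) a = a)
    (Q : ∀ a b, f (f a b) b = f (f b a) a)
    {p q : A} (h1 : f p q = f q q) (h2 : f q p = f p p) : p = q := by
  have h := Q p q
  rw [h1, h2, C q q, C p p] at h
  exact h.symm

theorem impJ (C : ∀ a b, f (f a b) a = a)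
    (Q : ∀ a b, f (f a b) b = f (f b a) a)
    (E : ∀ a b c, f a (f b c) = f b (f a c)) (a b : A) :
    f (f (f a b) b) b = f a b := by
  set u := f a b with hu
  set j := f u b with hj
  have d2 : f u (f j b) = f u u := by
    calc f u (f j b) = f u (f (f b u) u) := by rw [hj, Q u b]
      _ = f (f b u) (f u u) := E u (f b u) u
      _ = f u u := impRightOne f C Q E (f b u) u
  have haj : f a j = f u u := by
    calc f a j = f u (f a b) := E a u b
      _ = f u u := rfl
  have d1 : f (f j b) u = f u u := by
    calc f (f j b) u = f (f j b) (f a b) := rfl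
      _ = f a (f (f j b) b) := E (f j b) a b
      _ = f a (f (f b j) j) := by rw [Q j b]
      _ = f (f b j) (f a j) := E a (f b j) j
      _ = f (f b j) (f u u) := by rw [haj]
      _ = f u u := impRightOne f C Q E (f b j) u
  exact impAntisym f C Q d1 (by rw [d2]; exact impOne f C Q E u (f j b))

theorem impB (C : ∀ a b, f (f a b) a = a)
    (Q : ∀ a b, f (f a b) b = f (f b a) a)
    (E : ∀ a b c, f a (f b c) = f b (f a c)) (p q r : A) :
    f (f p q) (f (f q r) (f p r)) = f (f p q) (f p q) := by
  calc f (f p q) (f (f q r) (f p r))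
      = f (f q r) (f (f p q) (f p r)) := E _ _ _
    _ = f (f q r) (f p (f (f p q) r)) := by rw [E (f p q) p r]
    _ = f p (f (f q r) (f (f p q) r)) := E _ _ _
    _ = f p (f (f p q) (f (f q r) r)) := by rw [E (f q r) (f p q) r]
    _ = f p (f (f p q) (f (f r q) q)) := by rw [Q q r]
    _ = f (f p q) (f p (f (f r q) q)) := E _ _ _
    _ = f (f p q) (f (f r q) (f p q)) := by rw [E p (f r q) q]
    _ = f (f r q) (f (f p q) (f p q)) := E _ _ _
    _ = f (f p q) (f p q) := impRightOne f C Q E _ _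

theorem impMonJoin (C : ∀ a b, f (f a b) a = a)
    (Q : ∀ a b, f (f a b) b = f (f b a) a)
    (E : ∀ a b c, f a (f b c) = f b (f a c)) (p q r : A) :
    f (f p q) (f (f (f p r) r) (f (f q r) r)) = f (f p q) (f p q) := by
  calc f (f p q) (f (f (f p r) r) (f (f q r) r))
      = f (f (f p r) r) (f (f p q) (f (f q r) r)) := E _ _ _
    _ = f (f (f p r) r) (f (f q r) (f (f p q) r)) := by rw [E (f p q) (f q r) r]
    _ = f (f q r) (f (f (f p r) r) (f (f p q) r)) := E _ _ _
    _ = f (f q r) (f (f p q) (f (f (f p r) r) r)) := by rw [E (f (f p r) r) (f p q) r]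
    _ = f (f q r) (f (f p q) (f p r)) := by rw [impJ f C Q E p r]
    _ = f (f p q) (f (f q r) (f p r)) := E _ _ _
    _ = f (f p q) (f p q) := impB f C Q E p q r

theorem impS (C : ∀ a b, f (f a b) a = a)
    (Q : ∀ a b, f (f a b) b = f (f b a) a)
    (E : ∀ a b c, f a (f b c) = f b (f a c)) (a x y : A) :
    f (f a (f x y)) (f (f a x) (f a y)) = f (f a x) (f a x) := by
  set c := f a y with hc
  have hac : f a c = c := impD1 f C a y
  calc f (f a (f x y)) (f (f a x) (f a y))
      = f (f x c) (f (f a x) c) := by rw [E a x y]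
    _ = f (f a x) (f (f x c) c) := E _ _ _
    _ = f (f a x) (f (f x c) (f a c)) := by rw [hac]
    _ = f (f a x) (f a x) := impB f C Q E a x c

theorem impFa (C : ∀ a b, f (f a b) a = a)
    (Q : ∀ a b, f (f a b) b = f (f b a) a)
    (E : ∀ a b c, f a (f b c) = f b (f a c))
    {F : Set A} (hF : IsImpFilter f F) (a : A) :
    IsImpFilter f {x | f a x ∈ F} := by
  constructor
  · intro x
    show f a (f x x) ∈ F
    rw [impRightOne f C Q E a x]
    exact hF.1 x
  · intro x y hx hxy
    have hS : f (f a (f x y)) (f (f a x) (f a y)) ∈ F := by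
      rw [impS f C Q E a x y]; exact hF.1 (f a x)
    have h2 : f (f a x) (f a y) ∈ F := hF.2 _ _ hxy hS
    exact hF.2 _ _ hx h2

theorem impFa_sub (C : ∀ a b, f (f a b) a = a)
    (Q : ∀ a b, f (f a b) b = f (f b a) a)
    (E : ∀ a b c, f a (f b c) = f b (f a c))
    {F : Set A} (hF : IsImpFilter f F) (a : A) :
    F ⊆ {x | f a x ∈ F} := by
  intro x hx
  show f a x ∈ F
  have h : f x (f a x) ∈ F := by
    rw [E x a x, impRightOne f C Q E a x]; exact hF.1 x
  exact hF.2 _ _ hx h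

end ImpAlg

/-- In an implication algebra, a proper implicative filter is prime iff it is
irreducible. -/
theorem stmt_14 {A : Type*} (f : A → A → A)
    (contraction : ∀ a b, f (f a b) a = a)
    (quasicomm : ∀ a b, f (f a b) b = f (f b a) a)
    (exchange : ∀ a b c, f a (f b c) = f b (f a c))
    (F : Set A) (hF : IsProperFilter f F) :
    IsPrimeFilter f F ↔ IsIrreducibleFilter f F := by
  constructor
  · rintro ⟨hProp, hPrime⟩
    refine ⟨hProp, ?_⟩
    intro F₁ F₂ h₁ h₂ hU
    by_contra hcon
    push_neg at hcon
    obtain ⟨hne₁, hne₂⟩ := hcon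
    have hsub₁ : F ⊆ F₁ := by rw [hU]; exact Set.inter_subset_left
    have hsub₂ : F ⊆ F₂ := by rw [hU]; exact Set.inter_subset_right
    have hex₁ : ∃ a ∈ F₁, a ∉ F := by
      rcases Set.not_subset.mp (fun h => hne₁ (Set.Subset.antisymm hsub₁ h)) with ⟨a, ha, ha'⟩
      exact ⟨a, ha, ha'⟩
    have hex₂ : ∃ b ∈ F₂, b ∉ F := by
      rcases Set.not_subset.mp (fun h => hne₂ (Set.Subset.antisymm hsub₂ h)) with ⟨b, hb, hb'⟩
      exact ⟨b, hb, hb'⟩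
    obtain ⟨a, haF₁, haF⟩ := hex₁
    obtain ⟨b, hbF₂, hbF⟩ := hex₂
    have hj₁ : f (f a b) b ∈ F₁ := by
      have h1 : f a (f (f a b) b) ∈ F₁ := by
        rw [exchange a (f a b) b]
        exact h₁.1.1 (f a b)
      exact h₁.1.2 _ _ haF₁ h1
    have hj₂ : f (f a b) b ∈ F₂ := by
      rw [quasicomm a b]
      have h1 : f b (f (f b a) a) ∈ F₂ := by
        rw [exchange b (f b a) a]
        exact h₂.1.1 (f b a)
      exact h₂.1.2 _ _ hbF₂ h1
    have hjF : f (f a b) b ∈ F := by rw [hU]; exact ⟨hj₁, hj₂⟩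
    rcases hPrime a b hjF with h | h
    · exact haF h
    · exact hbF h
  · rintro ⟨hProp, hIrr⟩
    refine ⟨hProp, ?_⟩
    intro a b hj
    by_contra hcon
    push_neg at hcon
    obtain ⟨haF, hbF⟩ := hcon
    set Fa : Set A := {x | f a x ∈ F} with hFa
    set Fb : Set A := {x | f b x ∈ F} with hFb
    have hFilF : IsImpFilter f F := hProp.1
    have hFilA : IsImpFilter f Fa := impFa f contraction quasicomm exchange hFilF a
    have hFilB : IsImpFilter f Fb := impFa f contraction quasicomm exchange hFilF b
    have haFa : a ∈ Fa := hFilF.1 a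
    have hbFb : b ∈ Fb := hFilF.1 b
    -- F = Fa ∩ Fb
    have hU : F = Fa ∩ Fb := by
      apply Set.Subset.antisymm
      · intro x hx
        exact ⟨impFa_sub f contraction quasicomm exchange hFilF a hx,
               impFa_sub f contraction quasicomm exchange hFilF b hx⟩
      · rintro x ⟨hax, hbx⟩
        -- hax : f a x ∈ F, hbx : f b x ∈ F, hj : f (f a b) b ∈ F
        have hT : f (f a x) (f (f (f a b) b) (f (f x b) b)) ∈ F := by
          rw [impMonJoin f contraction quasicomm exchange a x b]
          exact hFilF.1 (f a x)
        have h1 : f (f (f a b) b) (f (f x b) b) ∈ F := hFilF.2 _ _ hax hT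
        have hm : f (f x b) b ∈ F := hFilF.2 _ _ hj h1
        have hmx : f (f (f x b) b) x ∈ F := by
          rw [quasicomm x b, impJ f contraction quasicomm exchange b x]
          exact hbx
        exact hFilF.2 _ _ hm hmx
    by_cases hAU : Fa = Set.univ
    · have : F = Fb := by rw [hU, hAU, Set.univ_inter]
      exact hbF (this ▸ hbFb)
    by_cases hBU : Fb = Set.univ
    · have : F = Fa := by rw [hU, hBU, Set.inter_univ]
      exact haF (this ▸ haFa)
    rcases hIrr Fa Fb ⟨hFilA, hAU⟩ ⟨hFilB, hBU⟩ hU with h | h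
    · exact haF (h ▸ haFa)
    · exact hbF (h ▸ hbFb)
end

section
/- If F is an implicative filter in an implication algebra and a₀ ∉ F, then there exists an irreducible (equivalently prime) implicative filter G with F ⊆ G and a₀ ∉ G. -/
section ImpAlg

variable {A : Type*} {f : A → A → A}

lemma imp_one' (hc : ∀ a b, f (f a b) a = a) (hq : ∀ a b, f (f a b) b = f (f b a) a)
    (he : ∀ a b c, f a (f b c) = f b (f a c)) (a b : A) :
    f a (f b b) = f (f b b) (f b b) := by
  conv_lhs => rw [← hc (f b b) (f a (f b b)), he a (f (f b b) (f a (f b b))) (f b b),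
    hq (f b b) (f a (f b b)), he a b b, he (f b (f a b)) b b, hc b (f a b)]

lemma one_imp' (hc : ∀ a b, f (f a b) a = a) (hq : ∀ a b, f (f a b) b = f (f b a) a)
    (he : ∀ a b c, f a (f b c) = f b (f a c)) (a b : A) :
    f (f a a) b = b := by
  conv_lhs => rw [← hc (f a a) b, imp_one' hc hq he (f (f a a) b) a,
    ← imp_one' hc hq he b a, hc b (f a a)]

lemma K' (hc : ∀ a b, f (f a b) a = a) (hq : ∀ a b, f (f a b) b = f (f b a) a)
    (he : ∀ a b c, f a (f b c) = f b (f a c)) (a b : A) :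
    f a (f b a) = f (f a a) (f a a) := by
  conv_lhs => rw [he a b a, imp_one' hc hq he b a]

lemma S' (hc : ∀ a b, f (f a b) a = a) (hq : ∀ a b, f (f a b) b = f (f b a) a)
    (he : ∀ a b c, f a (f b c) = f b (f a c)) (a b c : A) :
    f (f a (f b c)) (f (f a b) (f a c)) = f (f (f a b) (f a b)) (f (f a b) (f a b)) := by
  conv_lhs => rw [← hc (f a c) a, hc a c, he (f a (f b c)) (f a b) (f a (f a c)),
    he (f a (f b c)) a (f a c), he a b c, hq b (f a c), he a (f (f a c) b) b,
    he (f a b) (f (f a c) b) (f a b), imp_one' hc hq he (f (f a c) b) (f a b)]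

lemma I4' (hc : ∀ a b, f (f a b) a = a) (hq : ∀ a b, f (f a b) b = f (f b a) a)
    (he : ∀ a b c, f a (f b c) = f b (f a c)) (a b c : A) :
    f (f a c) (f (f b c) (f (f (f a b) b) c))
      = f (f (f a c) (f a c)) (f (f a c) (f a c)) := by
  conv_lhs => rw [he (f b c) (f (f a b) b) c, hq b c, he (f (f a b) b) (f c b) b,
    hq (f a b) b, he (f b (f a b)) a b, hc b (f a b), he (f c b) a b, hq c b,
    he a (f b c) c, K' hc hq he (f a c) (f b c)]

/-- The implicative filter generated by a set. -/
inductive GenF (f : A → A → A) (S : Set A) : A → Prop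
  | base {x : A} : x ∈ S → GenF f S x
  | one (a : A) : GenF f S (f a a)
  | mp {a b : A} : GenF f S a → GenF f S (f a b) → GenF f S b

lemma genF_filter (S : Set A) : IsImpFilter f {x | GenF f S x} :=
  ⟨fun a => GenF.one a, fun _ _ ha hab => GenF.mp ha hab⟩

lemma mem_of_mem_filter (hc : ∀ a b, f (f a b) a = a) (hq : ∀ a b, f (f a b) b = f (f b a) a)
    (he : ∀ a b c, f a (f b c) = f b (f a c)) {M : Set A} (hM : IsImpFilter f M)
    {x : A} (hx : x ∈ M) (a : A) : f a x ∈ M := by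
  have h1 : f x (f a x) ∈ M := by
    rw [he x a x, imp_one' hc hq he a x]
    exact hM.1 _
  exact hM.2 _ _ hx h1

lemma deduction (hc : ∀ a b, f (f a b) a = a) (hq : ∀ a b, f (f a b) b = f (f b a) a)
    (he : ∀ a b c, f a (f b c) = f b (f a c)) {M : Set A} (hM : IsImpFilter f M)
    (a : A) {x : A} (hx : GenF f (M ∪ {a}) x) : f a x ∈ M := by
  induction hx with
  | base h =>
    rcases h with h | h
    · exact mem_of_mem_filter hc hq he hM h a
    · rw [Set.mem_singleton_iff] at h
      rw [h]; exact hM.1 a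
  | one c =>
    rw [imp_one' hc hq he a c]
    exact hM.1 _
  | @mp p q hd hdi ih ihi =>
    have hS : f (f a (f p q)) (f (f a p) (f a q)) ∈ M := by
      rw [S' hc hq he a p q]; exact hM.1 _
    exact hM.2 _ _ ih (hM.2 _ _ ihi hS)

end ImpAlg

/-- If F is an implicative filter in an implication algebra and a₀ ∉ F, then
there is an irreducible (equivalently prime) implicative filter G with
F ⊆ G and a₀ ∉ G. -/
theorem stmt_15 {A : Type*} (f : A → A → A)
    (contraction : ∀ a b, f (f a b) a = a)
    (quasicomm : ∀ a b, f (f a b) b = f (f b a) a)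
    (exchange : ∀ a b c, f a (f b c) = f b (f a c))
    (F : Set A) (hF : IsImpFilter f F) (a₀ : A) (ha₀ : a₀ ∉ F) :
    ∃ G : Set A, IsIrreducibleFilter f G ∧ IsPrimeFilter f G ∧
      F ⊆ G ∧ a₀ ∉ G := by
  set S : Set (Set A) := {G | IsImpFilter f G ∧ F ⊆ G ∧ a₀ ∉ G} with hS
  obtain ⟨M, hFM, hMmax⟩ : ∃ M, F ⊆ M ∧ Maximal (· ∈ S) M := by
    apply zorn_subset_nonempty
    · intro c hcS hchain ⟨G0, hG0⟩
      refine ⟨⋃₀ c, ⟨⟨?_, ?_⟩, ?_, ?_⟩, fun s hs => Set.subset_sUnion_of_mem hs⟩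
      · intro a
        exact Set.mem_sUnion_of_mem ((hcS hG0).1.1 a) hG0
      · rintro a b ⟨G1, hG1, haG1⟩ ⟨G2, hG2, habG2⟩
        rcases hchain.total hG1 hG2 with h | h
        · exact Set.mem_sUnion_of_mem ((hcS hG2).1.2 a b (h haG1) habG2) hG2
        · exact Set.mem_sUnion_of_mem ((hcS hG1).1.2 a b haG1 (h habG2)) hG1
      · exact (Set.subset_sUnion_of_mem hG0).trans' (hcS hG0).2.1
      · rintro ⟨G1, hG1, haG1⟩
        exact (hcS hG1).2.2 haG1
    · exact ⟨hF, Set.Subset.rfl, ha₀⟩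
  obtain ⟨⟨hMfil, hFsub, hMa₀⟩, hmax⟩ := hMmax
  -- key step : for a ∉ M, f a a₀ ∈ M
  have key : ∀ a : A, a ∉ M → f a a₀ ∈ M := by
    intro a haM
    set N : Set A := {x | GenF f (M ∪ {a}) x} with hN
    have hNfil : IsImpFilter f N := genF_filter _
    have hMN : M ⊆ N := fun x hx => GenF.base (Or.inl hx)
    have haN : a ∈ N := GenF.base (Or.inr rfl)
    have ha₀N : a₀ ∈ N := by
      by_contra h
      have : N ∈ S := ⟨hNfil, hFsub.trans hMN, h⟩
      have := hmax this hMN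
      exact haM (this haN)
    exact deduction contraction quasicomm exchange hMfil a ha₀N
  have hproper : IsProperFilter f M := by
    refine ⟨hMfil, fun h => hMa₀ ?_⟩
    rw [h]; trivial
  have hprime : IsPrimeFilter f M := by
    refine ⟨hproper, fun a b hab => ?_⟩
    by_contra h
    push_neg at h
    obtain ⟨ha, hb⟩ := h
    have h1 : f a a₀ ∈ M := key a ha
    have h2 : f b a₀ ∈ M := key b hb
    have h3 : f (f a a₀) (f (f b a₀) (f (f (f a b) b) a₀)) ∈ M := by
      rw [I4' contraction quasicomm exchange a b a₀]
      exact hMfil.1 _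
    have h4 := hMfil.2 _ _ h1 h3
    have h5 := hMfil.2 _ _ h2 h4
    exact hMa₀ (hMfil.2 _ _ hab h5)
  have hirred : IsIrreducibleFilter f M := by
    refine ⟨hproper, fun F₁ F₂ h₁ h₂ hM => ?_⟩
    by_contra h
    push_neg at h
    obtain ⟨hne₁, hne₂⟩ := h
    have hMF₁ : M ⊆ F₁ := hM ▸ Set.inter_subset_left
    have hMF₂ : M ⊆ F₂ := hM ▸ Set.inter_subset_right
    obtain ⟨a, haF₁, haM⟩ : ∃ a, a ∈ F₁ ∧ a ∉ M := by
      by_contra hcon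
      push_neg at hcon
      exact hne₁ (Set.Subset.antisymm hMF₁ hcon)
    obtain ⟨b, hbF₂, hbM⟩ : ∃ b, b ∈ F₂ ∧ b ∉ M := by
      by_contra hcon
      push_neg at hcon
      exact hne₂ (Set.Subset.antisymm hMF₂ hcon)
    have hj₁ : f (f a b) b ∈ F₁ := by
      have : f a (f (f a b) b) ∈ F₁ := by
        rw [exchange a (f a b) b]
        exact h₁.1.1 _
      exact h₁.1.2 _ _ haF₁ this
    have hj₂ : f (f a b) b ∈ F₂ := by
      have : f b (f (f b a) a) ∈ F₂ := by
        rw [exchange b (f b a) a]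
        exact h₂.1.1 _
      have := h₂.1.2 _ _ hbF₂ this
      rw [quasicomm a b]
      exact this
    have : f (f a b) b ∈ M := hM ▸ ⟨hj₁, hj₂⟩
    rcases hprime.2 a b this with h | h
    · exact haM h
    · exact hbM h
  exact ⟨M, hirred, hprime, hFsub, hMa₀⟩
end

section
/- If F is an implicative filter in an implication algebra with a → b ∉ F for some a, b, then there exists a prime implicative filter G with F ⊆ G, a ∈ G, and b ∉ G. -/
/-- Bundle of implication algebra axioms. -/
structure IA {A : Type*} (f : A → A → A) : Prop where
  contr : ∀ a b, f (f a b) a = a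
  qc : ∀ a b, f (f a b) b = f (f b a) a
  ex : ∀ a b c, f a (f b c) = f b (f a c)

/-- `u` is the top element (equal to some `f c c`). -/
def One1 {A : Type*} (f : A → A → A) (u : A) : Prop := ∃ c, u = f c c

namespace IA

variable {A : Type*} {f : A → A → A}

theorem d2 (h : IA f) (x y : A) : f x (f x y) = f x y := by
  calc f x (f x y) = f (f (f x y) x) (f x y) := by rw [h.contr x y]
    _ = f x y := h.contr (f x y) x

theorem d8 (h : IA f) (x y : A) : f (f x y) (f x y) = f x x := by
  calc f (f x y) (f x y) = f (f x (f x y)) (f x y) := by rw [h.d2 x y]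
    _ = f (f (f x y) x) x := h.qc x (f x y)
    _ = f x x := by rw [h.contr x y]

theorem one_eq (h : IA f) (x y : A) : f x x = f y y := by
  have e1 : f x x = f (f (f x y) y) (f (f x y) y) := ((h.d8 (f x y) y).trans (h.d8 x y)).symm
  have e2 : f (f (f y x) x) (f (f y x) x) = f y y := (h.d8 (f y x) x).trans (h.d8 y x)
  rw [e1, ← e2, h.qc x y]

theorem unit_left (h : IA f) (x y : A) : f (f x x) y = y := by
  rw [h.one_eq x y, h.contr y y]

theorem unit_right (h : IA f) (x y : A) : f x (f y y) = f y y := by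
  rw [h.one_eq y x, h.d2 x x]

theorem o1 (h : IA f) (x y : A) : f y (f x y) = f x x := by
  rw [h.ex y x y, h.unit_right x y, h.one_eq y x]

end IA

theorem One1.eq {A : Type*} {f : A → A → A} {u : A} (hu : One1 f u) (h : IA f) (c : A) :
    u = f c c := by
  obtain ⟨d, hd⟩ := hu
  rw [hd, h.one_eq d c]

namespace IA

variable {A : Type*} {f : A → A → A}

theorem l7 (h : IA f) {x y : A} (h1 : One1 f (f x y)) : f (f y x) x = y := by
  rw [← h.qc x y, h1.eq h y, h.contr y y]

theorem o2 (h : IA f) {u v : A} (h1 : One1 f (f u v)) (c : A) :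
    One1 f (f (f c u) (f c v)) := by
  have e : f (f v u) u = v := h.l7 h1
  refine ⟨f v u, ?_⟩
  calc f (f c u) (f c v) = f (f c u) (f c (f (f v u) u)) := by rw [e]
    _ = f (f c u) (f (f v u) (f c u)) := by rw [h.ex c (f v u) u]
    _ = f (f v u) (f v u) := h.o1 (f v u) (f c u)

theorem peirce (h : IA f) {x z c : A} (h1 : One1 f (f (f x z) c)) : f x c = c := by
  have e1 : f (f c (f x z)) (f x z) = c := h.l7 h1
  calc f x c = f x (f (f c (f x z)) (f x z)) := by rw [e1]
    _ = f (f c (f x z)) (f x (f x z)) := h.ex x (f c (f x z)) (f x z)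
    _ = f (f c (f x z)) (f x z) := by rw [h.d2 x z]
    _ = c := e1

theorem ltr (h : IA f) {u v w : A} (h1 : One1 f (f u v)) (h2 : One1 f (f v w)) :
    One1 f (f u w) := by
  have e : f (f w v) v = w := h.l7 h2
  refine ⟨u, ?_⟩
  calc f u w = f u (f (f w v) v) := by rw [e]
    _ = f (f w v) (f u v) := h.ex u (f w v) v
    _ = f (f w v) (f u u) := by rw [h1.eq h u]
    _ = f u u := h.unit_right (f w v) u

theorem o3 (h : IA f) {u v : A} (h1 : One1 f (f u v)) (w : A) :
    One1 f (f (f v w) (f u w)) := by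
  have e : f (f v w) (f u w) = f u (f (f v w) w) := h.ex (f v w) u w
  rw [e]
  exact h.ltr h1 ⟨f v w, h.ex v (f v w) w⟩

theorem lub (h : IA f) {u v w : A} (h1 : One1 f (f u w)) (h2 : One1 f (f v w)) :
    One1 f (f (f (f u v) v) w) := by
  have e : f (f w v) v = w := h.l7 h2
  have m1 := h.o3 h1 v
  have m2 := h.o3 m1 v
  rw [e] at m2
  exact m2

theorem sdist (h : IA f) (x y z : A) :
    One1 f (f (f x (f y z)) (f (f x y) (f x z))) := by
  have hxz : One1 f (f (f x z) (f (f y (f x z)) (f x z))) := by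
    refine ⟨f x z, ?_⟩
    calc f (f x z) (f (f y (f x z)) (f x z))
        = f (f y (f x z)) (f (f x z) (f x z)) := h.ex (f x z) (f y (f x z)) (f x z)
      _ = f (f x z) (f x z) := h.unit_right (f y (f x z)) (f x z)
  have hxc : f x (f (f y (f x z)) (f x z)) = f (f y (f x z)) (f x z) := h.peirce hxz
  have hyc : One1 f (f y (f (f y (f x z)) (f x z))) :=
    ⟨f y (f x z), h.ex y (f y (f x z)) (f x z)⟩
  have h2 := h.o2 hyc x
  rw [hxc] at h2
  obtain ⟨w, hw⟩ := h2
  refine ⟨w, ?_⟩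
  calc f (f x (f y z)) (f (f x y) (f x z))
      = f (f x y) (f (f x (f y z)) (f x z)) := h.ex (f x (f y z)) (f x y) (f x z)
    _ = f (f x y) (f (f y (f x z)) (f x z)) := by rw [h.ex x y z]
    _ = f w w := hw

theorem h3 (h : IA f) (x y c : A) :
    One1 f (f (f (f x y) y) (f (f x c) (f (f y c) c))) := by
  have hx : One1 f (f x (f (f x c) (f (f y c) c))) := by
    refine ⟨f y c, ?_⟩
    calc f x (f (f x c) (f (f y c) c))
        = f (f x c) (f x (f (f y c) c)) := h.ex x (f x c) (f (f y c) c)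
      _ = f (f x c) (f (f y c) (f x c)) := by rw [h.ex x (f y c) c]
      _ = f (f y c) (f y c) := h.o1 (f y c) (f x c)
  have hy : One1 f (f y (f (f x c) (f (f y c) c))) := by
    refine ⟨f y c, ?_⟩
    calc f y (f (f x c) (f (f y c) c))
        = f (f x c) (f y (f (f y c) c)) := h.ex y (f x c) (f (f y c) c)
      _ = f (f x c) (f (f y c) (f y c)) := by rw [h.ex y (f y c) c]
      _ = f (f y c) (f y c) := h.unit_right (f x c) (f y c)
  exact h.lub hx hy

end IA

theorem mem_of_one1 {A : Type*} {f : A → A → A} {F : Set A} (hF : IsImpFilter f F)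
    {u : A} (hu : One1 f u) : u ∈ F := by
  obtain ⟨c, hc⟩ := hu
  rw [hc]
  exact hF.1 c

/-- The filter generated by a filter `G` and an element `x`. -/
def GenF_s16 {A : Type*} (f : A → A → A) (G : Set A) (x : A) : Set A := {w | f x w ∈ G}

theorem genF_filter_s16 {A : Type*} {f : A → A → A} (h : IA f) {G : Set A}
    (hG : IsImpFilter f G) (x : A) : IsImpFilter f (GenF_s16 f G x) := by
  constructor
  · intro w
    show f x (f w w) ∈ G
    rw [h.unit_right x w]
    exact hG.1 w
  · intro z w hz hzw
    have s := mem_of_one1 hG (h.sdist x z w)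
    have s2 := hG.2 _ _ hzw s
    exact hG.2 _ _ hz s2

theorem genF_sub {A : Type*} {f : A → A → A} (h : IA f) {G : Set A}
    (hG : IsImpFilter f G) (x : A) : G ⊆ GenF_s16 f G x := by
  intro z hz
  show f x z ∈ G
  exact hG.2 _ _ hz (mem_of_one1 hG ⟨x, h.o1 x z⟩)

theorem genF_self {A : Type*} {f : A → A → A} {G : Set A}
    (hG : IsImpFilter f G) (x : A) : x ∈ GenF_s16 f G x := hG.1 x

/-- If F is an implicative filter in an implication algebra with a → b ∉ F,
then there is a prime implicative filter G with F ⊆ G, a ∈ G, and b ∉ G. -/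
theorem stmt_16 {A : Type*} (f : A → A → A)
    (contraction : ∀ a b, f (f a b) a = a)
    (quasicomm : ∀ a b, f (f a b) b = f (f b a) a)
    (exchange : ∀ a b c, f a (f b c) = f b (f a c))
    (F : Set A) (hF : IsImpFilter f F) (a b : A) (hab : f a b ∉ F) :
    ∃ G : Set A, IsPrimeFilter f G ∧ F ⊆ G ∧ a ∈ G ∧ b ∉ G := by
  have h : IA f := ⟨contraction, quasicomm, exchange⟩
  set S : Set (Set A) := {G | IsImpFilter f G ∧ F ⊆ G ∧ a ∈ G ∧ b ∉ G} with hS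
  have hG0 : GenF_s16 f F a ∈ S := ⟨genF_filter_s16 h hF a, genF_sub h hF a, genF_self hF a, hab⟩
  have hchain : ∀ c ⊆ S, IsChain (· ⊆ ·) c → c.Nonempty → ∃ ub ∈ S, ∀ s ∈ c, s ⊆ ub := by
    rintro c hcS hch ⟨G1, hG1⟩
    refine ⟨⋃₀ c, ⟨⟨?_, ?_⟩, ?_, ?_, ?_⟩, fun s hs => Set.subset_sUnion_of_mem hs⟩
    · intro w
      exact ⟨G1, hG1, (hcS hG1).1.1 w⟩
    · rintro u v ⟨G2, hG2, hu⟩ ⟨G3, hG3, hv⟩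
      rcases eq_or_ne G2 G3 with rfl | hne
      · exact ⟨G2, hG2, (hcS hG2).1.2 u v hu hv⟩
      · rcases hch hG2 hG3 hne with hle | hle
        · exact ⟨G3, hG3, (hcS hG3).1.2 u v (hle hu) hv⟩
        · exact ⟨G2, hG2, (hcS hG2).1.2 u v hu (hle hv)⟩
    · exact fun z hz => ⟨G1, hG1, (hcS hG1).2.1 hz⟩
    · exact ⟨G1, hG1, (hcS hG1).2.2.1⟩
    · rintro ⟨G2, hG2, hb⟩
      exact (hcS hG2).2.2.2 hb
  obtain ⟨M, _hM0, hMmax⟩ := zorn_subset_nonempty S hchain _ hG0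
  obtain ⟨hMfil, hMF, haM, hbM⟩ := hMmax.prop
  refine ⟨M, ⟨⟨hMfil, ?_⟩, ?_⟩, hMF, haM, hbM⟩
  · intro huniv
    exact hbM (huniv ▸ Set.mem_univ b)
  · intro x y hxy
    by_contra hcon
    push_neg at hcon
    obtain ⟨hx, hy⟩ := hcon
    have key : ∀ z, z ∉ M → f z b ∈ M := by
      intro z hz
      by_contra hzb
      have hMz : GenF_s16 f M z ∈ S :=
        ⟨genF_filter_s16 h hMfil z, hMF.trans (genF_sub h hMfil z),
          genF_sub h hMfil z haM, hzb⟩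
      have hsub : GenF_s16 f M z ⊆ M := hMmax.le_of_ge hMz (genF_sub h hMfil z)
      exact hz (hsub (genF_self hMfil z))
    have hxb := key x hx
    have hyb := key y hy
    have t := mem_of_one1 hMfil (h.h3 x y b)
    have t1 := hMfil.2 _ _ hxy t
    have t2 := hMfil.2 _ _ hxb t1
    have t3 := hMfil.2 _ _ hyb t2
    exact hbM t3
end

section
/- Every implication algebra (A, →) admits an injective homomorphism h into the implication algebra of all subsets of some set X with a → b interpreted as (X \ a) ∪ b (Stone-style representation theorem; one may take X to be the set of prime implicative filters with h(a) = { F prime : a ∈ F }). -/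
namespace Stmt17Aux

universe u
variable {A : Type u} (f : A → A → A)
variable (C : ∀ a b, f (f a b) a = a)
variable (Q : ∀ a b, f (f a b) b = f (f b a) a)
variable (E : ∀ a b c, f a (f b c) = f b (f a c))

include C Q E

lemma K (a x : A) : f a (f x a) = f a a := by
  have h1 : f (f a (f x a)) a = a := C a (f x a)
  have h3 : f (f a (f x a)) (f x a) = f x a := by
    rw [E (f a (f x a)) x a, h1]
  have h4 : f (f a (f x a)) (f a (f x a)) = f a (f x a) := by
    conv_lhs => rw [E (f a (f x a)) a (f x a), h3]
  have h5 : f (f a a) a = a := C a a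
  have h7 : f (f a a) (f x a) = f x a := by rw [E (f a a) x a, h5]
  have h8 : f (f a a) (f a a) = f a a := by
    conv_lhs => rw [E (f a a) a a, h5]
  have h9 : f (f a a) (f a (f x a)) = f a (f x a) := by
    conv_lhs => rw [E (f a a) a (f x a), h7]
  have h10 : f (f a (f x a)) (f a a) = f a a := by
    conv_lhs => rw [E (f a (f x a)) a a, h1]
  have hq := Q (f a a) (f a (f x a))
  rw [h9, h10, h4, h8] at hq
  exact hq

lemma top (a x : A) : f x (f a a) = f a a := by
  rw [E x a a, K f C Q E a x]

lemma one_eq (a b : A) : f a a = f b b := by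
  have h1 : f (f a a) (f b b) = f b b := top f C Q E b (f a a)
  have h2 : f (f b b) (f a a) = f a a := top f C Q E a (f b b)
  have hq := Q (f a a) (f b b)
  rw [h1, h2, top f C Q E b (f b b), top f C Q E a (f a a)] at hq
  exact hq.symm

lemma idl (a b : A) : f (f a a) b = b := by
  rw [one_eq f C Q E a b]; exact C b b

lemma W (x z : A) : f x (f x z) = f x z := by
  have h := C (f x z) x
  rw [C x z] at h
  exact h

lemma Bid (w x y z : A) : f (f y z) (f (f x y) (f x z)) = f w w := by
  rw [E (f x y) x z, E (f y z) x (f (f x y) z), E (f y z) (f x y) z,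
    Q y z, E (f x y) (f z y) y, E x (f z y) (f (f x y) y),
    E x (f x y) y, top f C Q E (f x y) (f z y), one_eq f C Q E (f x y) w]

lemma Sid (w x y z : A) : f (f x (f y z)) (f (f x y) (f x z)) = f w w := by
  rw [E x y z]
  have h := Bid f C Q E w x y (f x z)
  rw [W f C Q E x z] at h
  exact h

lemma Tid (w x y b : A) : f (f x b) (f (f (f x y) b) b) = f w w := by
  rw [Q (f x y) b, E (f x b) (f b (f x y)) (f x y)]
  have h := Bid f C Q E w x b (f x y)
  rw [W f C Q E x y] at h
  exact h

def IsFilt (F : Set A) : Prop :=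
  (∀ x, f x x ∈ F) ∧ ∀ x y, x ∈ F → f x y ∈ F → y ∈ F

lemma mem_up {F : Set A} (hF : IsFilt f F) {x : A} (hx : x ∈ F) (y : A) :
    f y x ∈ F := by
  refine hF.2 x (f y x) hx ?_
  rw [K f C Q E x y]
  exact hF.1 x

def extF (F : Set A) (x : A) : Set A := {y | f x y ∈ F}

lemma extF_filt {F : Set A} (hF : IsFilt f F) (x : A) :
    IsFilt f (extF f F x) := by
  constructor
  · intro z
    show f x (f z z) ∈ F
    rw [top f C Q E z x]
    exact hF.1 z
  · intro y z hy hz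
    have hs : f (f x (f y z)) (f (f x y) (f x z)) ∈ F := by
      rw [Sid f C Q E x x y z]
      exact hF.1 x
    exact hF.2 (f x y) (f x z) hy (hF.2 (f x (f y z)) _ hz hs)

lemma up_filt (a : A) : IsFilt f {y | f a y = f a a} := by
  constructor
  · intro x
    show f a (f x x) = f a a
    rw [top f C Q E x a, one_eq f C Q E x a]
  · intro x y hx hy
    have hs := Sid f C Q E a a x y
    rw [hy, hx, idl f C Q E, idl f C Q E] at hs
    exact hs

lemma sep (a b : A) (hab : f a b ≠ f a a) :
    ∃ M : Set A, a ∈ M ∧ b ∉ M ∧ ∀ x y, f x y ∈ M ↔ (x ∈ M → y ∈ M) := by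
  classical
  set S : Set (Set A) := {F | IsFilt f F ∧ a ∈ F ∧ b ∉ F} with hS
  have h0 : {y | f a y = f a a} ∈ S := ⟨up_filt f C Q E a, rfl, hab⟩
  have hchainU : ∀ c ⊆ S, IsChain (· ⊆ ·) c → c.Nonempty →
      ∃ ub ∈ S, ∀ s ∈ c, s ⊆ ub := by
    intro c hcS hchain hcne
    obtain ⟨F0, hF0⟩ := hcne
    refine ⟨⋃₀ c, ⟨⟨?_, ?_⟩, ?_, ?_⟩, fun s hs => Set.subset_sUnion_of_mem hs⟩
    · intro x
      exact ⟨F0, hF0, (hcS hF0).1.1 x⟩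
    · rintro x y ⟨F1, hF1, hx⟩ ⟨F2, hF2, hxy⟩
      rcases hchain.total hF1 hF2 with h | h
      · exact ⟨F2, hF2, (hcS hF2).1.2 x y (h hx) hxy⟩
      · exact ⟨F1, hF1, (hcS hF1).1.2 x y hx (h hxy)⟩
    · exact ⟨F0, hF0, (hcS hF0).2.1⟩
    · rintro ⟨F1, hF1, hb⟩
      exact (hcS hF1).2.2 hb
  obtain ⟨M, -, hMS, hMmax⟩ := zorn_subset_nonempty S hchainU _ h0
  obtain ⟨hMf, haM, hbM⟩ := hMS
  have key : ∀ z, z ∉ M → f z b ∈ M := by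
    intro z hz
    by_contra hzb
    have hext : extF f M z ∈ S := by
      refine ⟨extF_filt f C Q E hMf z, ?_, hzb⟩
      exact mem_up f C Q E hMf haM z
    have hsub : M ⊆ extF f M z := fun y hy => mem_up f C Q E hMf hy z
    have : extF f M z ⊆ M := hMmax hext hsub
    exact hz (this (by show f z z ∈ M; exact hMf.1 z))
  refine ⟨M, haM, hbM, ?_⟩
  intro x y
  constructor
  · intro hxy hx
    exact hMf.2 x y hx hxy
  · intro himp
    by_cases hx : x ∈ M
    · exact mem_up f C Q E hMf (himp hx) x
    · by_cases hxy : f x y ∈ M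
      · exact hxy
      · exfalso
        have h1 : f x b ∈ M := key x hx
        have h2 : f (f x y) b ∈ M := key (f x y) hxy
        have ht : f (f x b) (f (f (f x y) b) b) ∈ M := by
          rw [Tid f C Q E a x y b]
          exact hMf.1 a
        exact hbM (hMf.2 (f (f x y) b) b h2 (hMf.2 (f x b) _ h1 ht))

end Stmt17Aux

/-- Stone-style representation theorem: every implication algebra (A, →)
admits an injective homomorphism into the implication algebra of all subsets
of some set X, where a → b is interpreted as (X \ a) ∪ b. -/
theorem stmt_17 {A : Type u} (f : A → A → A)
    (contraction : ∀ a b, f (f a b) a = a)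
    (quasicomm : ∀ a b, f (f a b) b = f (f b a) a)
    (exchange : ∀ a b c, f a (f b c) = f b (f a c)) :
    ∃ (X : Type u) (h : A → Set X), Function.Injective h ∧
      ∀ a b, h (f a b) = (Set.univ \ h a) ∪ h b := by
  classical
  refine ⟨{g : A → Prop // ∀ x y, g (f x y) ↔ (g x → g y)},
    fun a => {g | g.1 a}, ?_, ?_⟩
  · intro a b hab
    have hsep : ∀ a' b' : A, ({g : {g : A → Prop // ∀ x y, g (f x y) ↔ (g x → g y)} | g.1 a'} =
        {g | g.1 b'}) → f a' b' = f a' a' := by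
      intro a' b' h
      by_contra hne
      obtain ⟨M, haM, hbM, hhom⟩ :=
        Stmt17Aux.sep f contraction quasicomm exchange a' b' hne
      have hg : ∀ x y, (x ∈ M → y ∈ M) ↔ ((· ∈ M) x → (· ∈ M) y) := fun _ _ => Iff.rfl
      let g : {g : A → Prop // ∀ x y, g (f x y) ↔ (g x → g y)} :=
        ⟨fun x => x ∈ M, fun x y => hhom x y⟩
      have : g ∈ {g : {g : A → Prop // ∀ x y, g (f x y) ↔ (g x → g y)} | g.1 a'} := haM
      rw [h] at this
      exact hbM this
    have h1 : f a b = f a a := hsep a b hab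
    have h2 : f b a = f b b := hsep b a hab.symm
    have hq := quasicomm a b
    rw [h1, h2, Stmt17Aux.idl f contraction quasicomm exchange,
      Stmt17Aux.idl f contraction quasicomm exchange] at hq
    exact hq.symm
  · intro a b
    ext g
    simp only [Set.mem_setOf_eq, Set.mem_union, Set.mem_diff, Set.mem_univ, true_and]
    rw [g.2 a b]
    tauto
end

section
/- Every finite implication algebra has a finite representation: it embeds into (℘(X), →) for some finite set X, where a → b = (X \ a) ∪ b. -/
/-!
Write `a ≼ b` for `a ⇒ b = a ⇒ a`; the element `a ⇒ a` does not depend on `a`, and `≼` is a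
partial order in which the implicational tautologies needed below (Frege's axiom and the
implicational excluded middle `(x ⇒ b) ⇒ ((x ⇒ y) ⇒ b) ⇒ b`) hold. The points of the
representing space are valuations: sets `F` with `a ⇒ b ∈ F ↔ (a ∈ F → b ∈ F)`. If `a ⋠ b`,
take a deductive system `F` maximal among those containing `a` and avoiding `b`. Maximality
forces `x ⇒ b ∈ F` whenever `x ∉ F`, because `{z | x ⇒ z ∈ F}` is again such a system, and
excluded middle turns this into the valuation property. Hence valuations separate points.
-/

structure IsImplicationAlgebra {A : Type*} (f : A → A → A) : Prop where
  contraction : ∀ a b, f (f a b) a = a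
  quasicomm : ∀ a b, f (f a b) b = f (f b a) a
  exchange : ∀ a b c, f a (f b c) = f b (f a c)

structure IsDeductiveSystem {A : Type*} (f : A → A → A) (F : Set A) : Prop where
  imp_self_mem : ∀ c, f c c ∈ F
  mem_of_mem_of_imp_mem : ∀ {x y}, x ∈ F → f x y ∈ F → y ∈ F

def IsValuation {A : Type*} (f : A → A → A) (F : Set A) : Prop :=
  ∀ x y, f x y ∈ F ↔ (x ∈ F → y ∈ F)

namespace IsImplicationAlgebra

variable {A : Type*} {f : A → A → A} (hf : IsImplicationAlgebra f)
include hf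

local infixr:60 " ⇒ " => f

theorem imp_imp_self_imp_self (a b : A) : (a ⇒ b) ⇒ a ⇒ a = a ⇒ a := by
  rw [← hf.exchange, hf.contraction]

theorem imp_self_eq (a b : A) : a ⇒ a = b ⇒ b := by
  have absorb (a b : A) : (b ⇒ a ⇒ a) ⇒ a ⇒ b ⇒ b = a ⇒ b ⇒ b := by
    rw [← hf.exchange a, hf.imp_imp_self_imp_self]
  have imp_self_of_imp_top (a b : A) : (b ⇒ a ⇒ a) ⇒ b ⇒ a ⇒ a = a ⇒ a := by
    have h := hf.quasicomm (a ⇒ a) (b ⇒ a ⇒ a)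
    have hv : (b ⇒ a ⇒ a) ⇒ a ⇒ a = a ⇒ a := by
      rw [hf.exchange b a a, hf.imp_imp_self_imp_self]
    rwa [hf.exchange (a ⇒ a) b, hf.imp_imp_self_imp_self a a, hv,
      hf.imp_imp_self_imp_self a a] at h
  -- `b ⇒ a ⇒ a` and `a ⇒ b ⇒ b` absorb each other, so quasicommutativity equates their squares.
  have h := hf.quasicomm (b ⇒ a ⇒ a) (a ⇒ b ⇒ b)
  rwa [absorb, absorb, imp_self_of_imp_top, imp_self_of_imp_top, eq_comm] at h

local notation:50 a:51 " ≼ " b:51 => a ⇒ b = a ⇒ a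

theorem top_imp (a b : A) : (a ⇒ a) ⇒ b = b := by
  rw [hf.imp_self_eq a b, hf.contraction]

theorem imp_top (x a : A) : x ⇒ a ⇒ a = a ⇒ a := by
  have hx : x ⇒ x ⇒ x = x ⇒ x := calc
    x ⇒ x ⇒ x = x ⇒ ((x ⇒ x) ⇒ x) ⇒ x := by rw [hf.contraction x x]
    _ = x ⇒ (x ⇒ x ⇒ x) ⇒ x ⇒ x := by rw [hf.quasicomm (x ⇒ x) x]
    _ = (x ⇒ x ⇒ x) ⇒ x ⇒ x ⇒ x := hf.exchange _ _ _
    _ = x ⇒ x := hf.imp_self_eq _ _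
  rw [hf.imp_self_eq a x, hx]

theorem le_antisymm {a b : A} (hab : a ≼ b) (hba : b ≼ a) : a = b := by
  have h := hf.quasicomm a b
  rwa [hab, hba, hf.top_imp, hf.top_imp, eq_comm] at h

theorem le_imp (x b : A) : b ≼ x ⇒ b := by
  rw [hf.exchange, hf.imp_top]

theorem le_imp_imp_self (x b : A) : x ≼ (x ⇒ b) ⇒ b := by
  rw [hf.exchange, hf.imp_self_eq (x ⇒ b)]

theorem imp_imp_idem (x b : A) : x ⇒ x ⇒ b = x ⇒ b := by
  refine hf.le_antisymm ?_ (hf.le_imp x (x ⇒ b))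
  rw [hf.quasicomm, hf.contraction, hf.imp_self_eq x]

theorem imp_imp_of_le {a b : A} (h : a ≼ b) : (b ⇒ a) ⇒ a = b := by
  rw [← hf.quasicomm, h, hf.top_imp]

theorem le_trans {x y z : A} (hxy : x ≼ y) (hyz : y ≼ z) : x ≼ z := calc
  x ⇒ z = (z ⇒ y) ⇒ x ⇒ y := by rw [← hf.exchange, hf.imp_imp_of_le hyz]
  _ = x ⇒ x := by rw [hxy, hf.imp_top]

theorem imp_le_imp_left {a b : A} (h : a ≼ b) (c : A) : c ⇒ a ≼ c ⇒ b := by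
  rw [← hf.imp_imp_of_le h, hf.exchange c, hf.le_imp]

theorem imp_le_imp_right {a b : A} (h : a ≼ b) (c : A) : b ⇒ c ≼ a ⇒ c := by
  rw [← hf.exchange, hf.quasicomm, hf.le_trans h (hf.le_imp _ _), hf.imp_self_eq a]

theorem imp_le_imp_imp_imp (a x y : A) : x ⇒ y ≼ (a ⇒ x) ⇒ a ⇒ y := by
  rw [hf.exchange, hf.exchange (x ⇒ y) a, hf.quasicomm,
    hf.imp_le_imp_left (hf.le_imp (y ⇒ x) x) a, hf.imp_self_eq (a ⇒ x)]

theorem imp_imp_le_imp_imp_imp (a x y : A) : a ⇒ x ⇒ y ≼ (a ⇒ x) ⇒ a ⇒ y := by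
  have h := hf.imp_le_imp_left (hf.imp_le_imp_imp_imp a x y) a
  rwa [hf.exchange a (a ⇒ x), hf.imp_imp_idem] at h

theorem imp_le_imp_imp_imp_imp (x y b : A) : x ⇒ b ≼ ((x ⇒ y) ⇒ b) ⇒ b := by
  set c := ((x ⇒ y) ⇒ b) ⇒ b
  refine hf.le_trans (hf.imp_le_imp_left (hf.le_imp ((x ⇒ y) ⇒ b) b) x) ?_
  have h := hf.imp_le_imp_right (hf.le_imp_imp_self (x ⇒ y) b) x
  rw [hf.contraction] at h
  rw [hf.quasicomm, h, hf.imp_self_eq (x ⇒ c)]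

section DeductiveSystem

variable {F : Set A} (hF : IsDeductiveSystem f F)
include hF

theorem imp_mem (x : A) {y : A} (hy : y ∈ F) : x ⇒ y ∈ F :=
  hF.mem_of_mem_of_imp_mem hy (by rw [hf.le_imp]; exact hF.imp_self_mem y)

theorem isDeductiveSystem_imp_mem (x : A) : IsDeductiveSystem f {z | x ⇒ z ∈ F} where
  imp_self_mem c := by rw [Set.mem_ofPred_eq, hf.imp_top]; exact hF.imp_self_mem c
  mem_of_mem_of_imp_mem {z w} hz hzw := by
    have hfrege : (x ⇒ z ⇒ w) ⇒ (x ⇒ z) ⇒ x ⇒ w ∈ F := by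
      rw [hf.imp_imp_le_imp_imp_imp]; exact hF.imp_self_mem _
    exact hF.mem_of_mem_of_imp_mem hz (hF.mem_of_mem_of_imp_mem hzw hfrege)

theorem isValuation_of_forall_imp_mem {b : A} (hb : b ∉ F) (h : ∀ x ∉ F, x ⇒ b ∈ F) :
    IsValuation f F := by
  refine fun x y => ⟨fun hxy hx => hF.mem_of_mem_of_imp_mem hx hxy, fun hxy => ?_⟩
  by_cases hx : x ∈ F
  · exact hf.imp_mem hF x (hxy hx)
  by_contra hxyF
  have hcases : (x ⇒ b) ⇒ ((x ⇒ y) ⇒ b) ⇒ b ∈ F := by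
    rw [hf.imp_le_imp_imp_imp_imp]; exact hF.imp_self_mem _
  exact hb (hF.mem_of_mem_of_imp_mem (h _ hxyF) (hF.mem_of_mem_of_imp_mem (h x hx) hcases))

end DeductiveSystem

theorem isDeductiveSystem_setOf_le (a : A) : IsDeductiveSystem f {x | a ≼ x} where
  imp_self_mem c := (hf.imp_top a c).trans (hf.imp_self_eq c a)
  mem_of_mem_of_imp_mem {x y} hx hxy := by
    have h := hf.imp_imp_le_imp_imp_imp a x y
    rw [Set.mem_ofPred_eq] at hx hxy ⊢
    simpa only [hxy, hx, hf.top_imp] using h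

theorem exists_isValuation_of_not_le [Finite A] {a b : A} (hab : ¬ a ≼ b) :
    ∃ F, IsValuation f F ∧ a ∈ F ∧ b ∉ F := by
  obtain ⟨F, ⟨hF, haF, hbF⟩, hmax⟩ :=
    (Set.toFinite {F : Set A | IsDeductiveSystem f F ∧ a ∈ F ∧ b ∉ F}).exists_maximal
      ⟨_, hf.isDeductiveSystem_setOf_le a, rfl, hab⟩
  refine ⟨F, hf.isValuation_of_forall_imp_mem hF hbF fun x hx => ?_, haF, hbF⟩
  by_contra hxb
  have hFG : F ⊆ {z | x ⇒ z ∈ F} := fun z hz => hf.imp_mem hF x hz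
  exact hx (hmax ⟨hf.isDeductiveSystem_imp_mem hF x, hFG haF, hxb⟩ hFG (hF.imp_self_mem x))

theorem eq_of_forall_isValuation [Finite A] {a b : A}
    (h : ∀ F, IsValuation f F → (a ∈ F ↔ b ∈ F)) : a = b := by
  by_contra hne
  have hsep : ¬ a ≼ b ∨ ¬ b ≼ a := by
    by_contra! hle
    exact hne (hf.le_antisymm hle.1 hle.2)
  obtain ⟨F, hF, hx, hy⟩ | ⟨F, hF, hx, hy⟩ :=
    hsep.imp hf.exists_isValuation_of_not_le hf.exists_isValuation_of_not_le
  · exact hy ((h F hF).1 hx)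
  · exact hy ((h F hF).2 hx)

end IsImplicationAlgebra

/-- Every finite implication algebra has a finite representation: it embeds
into (℘(X), →) for some finite set X, where a → b = (X \ a) ∪ b. -/
theorem stmt_18 {A : Type u} [Finite A] (f : A → A → A)
    (contraction : ∀ a b, f (f a b) a = a)
    (quasicomm : ∀ a b, f (f a b) b = f (f b a) a)
    (exchange : ∀ a b c, f a (f b c) = f b (f a c)) :
    ∃ (X : Type u) (_ : Finite X) (h : A → Set X), Function.Injective h ∧
      ∀ a b, h (f a b) = (Set.univ \ h a) ∪ h b := by
  have hf : IsImplicationAlgebra f := ⟨contraction, quasicomm, exchange⟩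
  refine ⟨{F : Set A // IsValuation f F}, inferInstance, fun a => {F | a ∈ F.1},
    fun a b hab => hf.eq_of_forall_isValuation fun F hF => ?_, fun a b => ?_⟩
  · exact Set.ext_iff.1 hab ⟨F, hF⟩
  · ext F
    simp [F.2 a b, imp_iff_not_or]
end
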